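/- Let A < B, let p₁ ≥ 1, let Ψ₀ ≡ 1, and let Ψ₁,…,Ψ_{k−1} : [A,B] → ℝ and C₂₂ : [A,B] → ℝ^{p₁×p₁} (symmetric-matrix valued) be continuous. Suppose that {Ψ₀,…,Ψ_{k−1}} is a Chebyshev system on [A,B] and that for every nonzero vector Q ∈ ℝ^{p₁} the family {Ψ₀,…,Ψ_{k−1}, x ↦ QᵀC₂₂(x)Q} is a Chebyshev system on [A,B]. Then for any finitely supported probability measure ξ on [A,B] there exists a finitely supported probability measure ξ⁺ on [A,B] with at most ⌊(k+2)/2⌋ support points such that ∫_A^B Ψ_i dξ⁺ = ∫_A^B Ψ_i dξ for all i = 0,…,k−1 and the matrix ∫_A^B C₂₂(x) dξ⁺(x) − ∫_A^B C₂₂(x) dξ(x) is positive semidefinite. -/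

import Mathlib

open MeasureTheory Set Matrix

/-- A family of functions `Ψ₀, …, Ψ_{k-1}` is a Chebyshev system on `[A,B]` if for all
points `A ≤ x₀ < x₁ < ⋯ < x_{k-1} ≤ B` the matrix `(Ψ i (x j))` has positive determinant. -/
def IsChebyshevSystem (A B : ℝ) {k : ℕ} (Ψ : Fin k → ℝ → ℝ) : Prop :=
  ∀ x : Fin k → ℝ, StrictMono x → (∀ j, x j ∈ Set.Icc A B) →
    0 < (Matrix.of fun i j : Fin k => Ψ i (x j)).det

/-- `ξ` is a design on `[A,B]`: a finitely supported probability measure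
`ξ = ∑_{x ∈ s} w_x δ_x` with support points `s ⊆ [A,B]` and positive weights. -/
def IsDesignOn (A B : ℝ) (ξ : Measure ℝ) (s : Finset ℝ) : Prop :=
  IsProbabilityMeasure ξ ∧ ↑s ⊆ Set.Icc A B ∧ (∀ x ∈ s, 0 < ξ {x}) ∧
    ξ = ∑ x ∈ s, ξ {x} • Measure.dirac x

/-- The entrywise integral `∫ C₂₂(x) dξ(x)` of a matrix-valued function. -/
noncomputable def matrixIntegral {p₁ : ℕ} (C : ℝ → Matrix (Fin p₁) (Fin p₁) ℝ)
    (ξ : Measure ℝ) : Matrix (Fin p₁) (Fin p₁) ℝ :=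
  Matrix.of fun a b => ∫ x, C x a b ∂ξ

open Classical in
/-- The index of a design with support `s` on `[A,B]`: the number of support points in
the open interval `(A,B)` plus one half times the number of support points among the
endpoints `{A, B}`. -/
noncomputable def designIndex (A B : ℝ) (s : Finset ℝ) : ℝ :=
  ((s.filter fun x => x ∈ Set.Ioo A B).card : ℝ) +
    ((s.filter fun x => x = A ∨ x = B).card : ℝ) / 2

/-!
Designs are handled as finitely supported weight functions `W : ℝ →₀ ℝ`. For nodes
`y₀ < ⋯ < y_k` in `[A,B]`, the cofactors `d_l` along the last row of the matrix
`(Ψ_i(y_j); g(y_j))` do not depend on `g`; they alternate in sign (`d_k > 0`) because `Ψ` is a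
Chebyshev system, they annihilate every `Ψ_i`, and `∑ d_l g(y_l) > 0` whenever `Ψ` extended by `g`
is a Chebyshev system. So moving `W` by `t • d` keeps the `Ψ`-moments and strictly increases
`∫ QᵀC₂₂Q` for every `Q ≠ 0`; if every node with a negative cofactor carries weight, the largest
admissible `t` removes a support point. When `W` has more than `⌊(k+2)/2⌋` support points the
nodes can be chosen like this (inside the support if it has at least `k+1` points, otherwise the
support together with new points at positive-cofactor positions), and the new design has at most
`max |supp W| (k+1)` points. Among the designs on at most that many points with the `Ψ`-moments
of `ξ` and with `∫ QᵀC₂₂Q` at least that of `ξ`, which form a compact set, one maximising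
`∫ tr C₂₂` therefore has at most `⌊(k+2)/2⌋` support points.
-/

open Finset Finsupp

section Cofactor

variable {k : ℕ}

noncomputable def lastRowCofactor (Ψ : Fin k → ℝ → ℝ) (y : Fin (k + 1) → ℝ) (l : Fin (k + 1)) :
    ℝ :=
  (-1) ^ (k + (l : ℕ)) * (of fun i j : Fin k => Ψ i (y (l.succAbove j))).det

theorem det_snoc_eq_sum_lastRowCofactor (Ψ : Fin k → ℝ → ℝ) (g : ℝ → ℝ) (y : Fin (k + 1) → ℝ) :
    (of fun i j : Fin (k + 1) => (Fin.snoc Ψ g : Fin (k + 1) → ℝ → ℝ) i (y j)).det =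
      ∑ l, lastRowCofactor Ψ y l * g (y l) := by
  rw [det_succ_row _ (Fin.last k)]
  refine Finset.sum_congr rfl fun l _ => ?_
  simp only [lastRowCofactor, of_apply, Fin.snoc_last, submatrix, Fin.succAbove_last,
    Fin.snoc_castSucc, Fin.val_last]
  ring

theorem sum_lastRowCofactor_mul_eq_zero (Ψ : Fin k → ℝ → ℝ) (y : Fin (k + 1) → ℝ) (i : Fin k) :
    ∑ l, lastRowCofactor Ψ y l * Ψ i (y l) = 0 := by
  rw [← det_snoc_eq_sum_lastRowCofactor]
  refine det_zero_of_row_eq (Fin.castSucc_lt_last i).ne ?_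
  ext j
  simp [Fin.snoc_castSucc, Fin.snoc_last]

theorem IsChebyshevSystem.lastRowCofactor_neg_iff {A B : ℝ} {Ψ : Fin k → ℝ → ℝ}
    (hΨ : IsChebyshevSystem A B Ψ) {y : Fin (k + 1) → ℝ} (hy : StrictMono y)
    (hyAB : ∀ l, y l ∈ Icc A B) (l : Fin (k + 1)) :
    lastRowCofactor Ψ y l < 0 ↔ Odd (k + (l : ℕ)) := by
  have hminor := hΨ (y ∘ l.succAbove) (hy.comp (Fin.strictMono_succAbove l)) fun j => hyAB _
  rcases Nat.even_or_odd (k + (l : ℕ)) with h | h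
  · simp only [lastRowCofactor, h.neg_one_pow, one_mul, Nat.not_odd_iff_even.2 h, iff_false,
      not_lt]
    exact hminor.le
  · simp only [lastRowCofactor, h.neg_one_pow, neg_one_mul, neg_lt_zero, h, iff_true]
    exact hminor

end Cofactor

section CofactorDesign

variable {k : ℕ}

theorem card_filter_orderEmbOfFin_lt {α : Type*} [LinearOrder α] (T : Finset α)
    (hT : #T = k + 1) (l : Fin (k + 1)) :
    #{t ∈ T | T.orderEmbOfFin hT l < t} = k - l := by
  have : {t ∈ T | T.orderEmbOfFin hT l < t} =
      (Finset.Ioi l).map (T.orderEmbOfFin hT).toEmbedding := by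
    ext t
    constructor
    · intro ht
      obtain ⟨i, rfl⟩ : t ∈ Set.range (T.orderEmbOfFin hT) := by
        rw [Finset.range_orderEmbOfFin]; exact (Finset.mem_filter.1 ht).1
      simpa using (Finset.mem_filter.1 ht).2
    · simp only [Finset.mem_map, Finset.mem_filter]
      rintro ⟨i, hli, rfl⟩
      exact ⟨T.orderEmbOfFin_mem hT i, by simpa using hli⟩
  rw [this, Finset.card_map, Fin.card_Ioi]
  omega

noncomputable def cofactorDesign (Ψ : Fin k → ℝ → ℝ) (T : Finset ℝ) (hT : #T = k + 1) :
    ℝ →₀ ℝ :=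
  ∑ l, Finsupp.single (T.orderEmbOfFin hT l) (lastRowCofactor Ψ (T.orderEmbOfFin hT) l)

variable (Ψ : Fin k → ℝ → ℝ) (T : Finset ℝ) (hT : #T = k + 1)

theorem linearCombination_cofactorDesign (g : ℝ → ℝ) :
    Finsupp.linearCombination ℝ g (cofactorDesign Ψ T hT) =
      (of fun i j : Fin (k + 1) =>
        (Fin.snoc Ψ g : Fin (k + 1) → ℝ → ℝ) i (T.orderEmbOfFin hT j)).det := by
  simp [cofactorDesign, det_snoc_eq_sum_lastRowCofactor]

theorem cofactorDesign_apply_orderEmbOfFin (l : Fin (k + 1)) :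
    cofactorDesign Ψ T hT (T.orderEmbOfFin hT l) = lastRowCofactor Ψ (T.orderEmbOfFin hT) l := by
  simp [cofactorDesign, Finsupp.finsetSum_apply, Finsupp.single_apply]

theorem support_cofactorDesign_subset : (cofactorDesign Ψ T hT).support ⊆ T := by
  refine Finsupp.support_finsetSum.trans (Finset.biUnion_subset.2 fun l _ => ?_)
  exact Finsupp.support_single_subset.trans (by simp [T.orderEmbOfFin_mem hT l])

variable {A B : ℝ} {Ψ T hT}

theorem IsChebyshevSystem.odd_card_of_cofactorDesign_neg (hΨ : IsChebyshevSystem A B Ψ)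
    (hTAB : ↑T ⊆ Icc A B) {x : ℝ} (hx : cofactorDesign Ψ T hT x < 0) :
    x ∈ T ∧ Odd #{t ∈ T | x < t} := by
  have hxT : x ∈ T := support_cofactorDesign_subset Ψ T hT (Finsupp.mem_support_iff.2 hx.ne)
  obtain ⟨l, rfl⟩ : x ∈ Set.range (T.orderEmbOfFin hT) := by rwa [Finset.range_orderEmbOfFin]
  rw [cofactorDesign_apply_orderEmbOfFin,
    hΨ.lastRowCofactor_neg_iff (T.orderEmbOfFin hT).strictMono
      (fun j => hTAB (T.orderEmbOfFin_mem hT j))] at hx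
  obtain ⟨c, hc⟩ := hx
  refine ⟨hxT, c - l, ?_⟩
  rw [card_filter_orderEmbOfFin_lt]
  omega

theorem IsChebyshevSystem.exists_cofactorDesign_neg (hΨ : IsChebyshevSystem A B Ψ)
    (hTAB : ↑T ⊆ Icc A B) (hk : 0 < k) : ∃ x, cofactorDesign Ψ T hT x < 0 := by
  refine ⟨T.orderEmbOfFin hT ⟨k - 1, by omega⟩, ?_⟩
  rw [cofactorDesign_apply_orderEmbOfFin,
    hΨ.lastRowCofactor_neg_iff (T.orderEmbOfFin hT).strictMono
      (fun j => hTAB (T.orderEmbOfFin_mem hT j))]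
  exact ⟨k - 1, by simp; omega⟩

end CofactorDesign

theorem Finsupp.exists_add_smul_nonneg_card_support_lt {α : Type*} [DecidableEq α]
    (W D : α →₀ ℝ) (hW : ∀ x, 0 ≤ W x) (hD : ∃ x, D x < 0) (hDW : ∀ x, D x < 0 → 0 < W x) :
    ∃ t : ℝ, 0 < t ∧ (∀ x, 0 ≤ (W + t • D) x) ∧
      #(W + t • D).support < #(W.support ∪ D.support) := by
  set N := {x ∈ D.support | D x < 0}
  have hN : N.Nonempty := by
    obtain ⟨x, hx⟩ := hD
    exact ⟨x, Finset.mem_filter.2 ⟨Finsupp.mem_support_iff.2 hx.ne, hx⟩⟩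
  have hmemN {x : α} : x ∈ N ↔ D x < 0 := by
    simpa [N] using fun h : D x < 0 => h.ne
  -- the largest step keeping all weights nonnegative; it kills the point `x₀` attaining it
  set t := N.inf' hN fun x => W x / -D x
  obtain ⟨x₀, hx₀N, ht₀⟩ := N.exists_mem_eq_inf' hN fun x => W x / -D x
  have hD₀ : D x₀ < 0 := hmemN.1 hx₀N
  have ht : 0 < t := (Finset.lt_inf'_iff hN).2 fun x hx =>
    div_pos (hDW x (hmemN.1 hx)) (neg_pos.2 (hmemN.1 hx))
  refine ⟨t, ht, fun x => ?_, Finset.card_lt_card ?_⟩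
  · simp only [Finsupp.add_apply, Finsupp.smul_apply, smul_eq_mul]
    rcases lt_or_ge (D x) 0 with hx | hx
    · have htx : t ≤ W x / -D x := N.inf'_le _ (hmemN.2 hx)
      rw [le_div_iff₀ (neg_pos.2 hx)] at htx
      linarith
    · nlinarith [hW x]
  · refine Finset.ssubset_iff_subset_ne.2 ⟨?_, fun h => ?_⟩
    · exact Finsupp.support_add.trans (Finset.union_subset_union le_rfl Finsupp.support_smul)
    · have hx₀ : x₀ ∈ (W + t • D).support := by
        rw [h]; exact Finset.mem_union_right _ (Finsupp.mem_support_iff.2 hD₀.ne)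
      refine Finsupp.mem_support_iff.1 hx₀ ?_
      simp only [Finsupp.add_apply, Finsupp.smul_apply, smul_eq_mul, t, ht₀]
      field_simp [hD₀.ne]
      ring

section Nodes

variable {α : Type*} [LinearOrder α]

theorem Finset.card_filter_lt_insert {T : Finset α} {a x : α} (ha : a ∉ T) (hxa : x < a) :
    #{t ∈ insert a T | x < t} = #{t ∈ T | x < t} + 1 := by
  rw [filter_insert, if_pos hxa, card_insert_of_notMem (by simp [ha])]

variable [DenselyOrdered α]

theorem Finset.exists_superset_odd_above (φ : ℕ) {a b : α} (S : Finset α)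
    (hS : ↑S ⊆ Set.Icc a b) (hcard : φ < #S) :
    ∃ T : Finset α, S ⊆ T ∧ ↑T ⊆ Set.Icc a b ∧ #T = #S + φ ∧
      ∀ x ∈ T, x ∉ S → Odd #{t ∈ T | x < t} := by
  induction φ generalizing b S with
  | zero => exact ⟨S, subset_rfl, hS, rfl, fun x hxT hxS => absurd hxT hxS⟩
  | succ φ ih =>
    have hne : S.Nonempty := card_pos.1 (by omega)
    set top := S.max' hne
    have htop : top ∈ S := S.max'_mem hne
    have hcard' : #(S.erase top) = #S - 1 := card_erase_of_mem htop
    have hne' : (S.erase top).Nonempty := card_pos.1 (by omega)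
    set b' := (S.erase top).max' hne'
    -- `f` gets only `top` above it, and every point of `T'` gets the two points `f, top` above it
    obtain ⟨f, hb'f, hftop⟩ : ∃ f, b' < f ∧ f < top :=
      _root_.exists_between (S.lt_max'_of_mem_erase_max' hne ((S.erase top).max'_mem hne'))
    obtain ⟨T', hST', hT'ab, hT'card, hT'odd⟩ := ih (b := b') (S.erase top)
      (fun x hx => ⟨(hS (mem_of_mem_erase hx)).1, le_max' _ x hx⟩) (by omega)
    have hT'f : ∀ x ∈ T', x < f := fun x hx => (hT'ab hx).2.trans_lt hb'f
    have hfT' : f ∉ T' := fun h => (hT'f f h).false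
    have htopT : top ∉ insert f T' := by
      simpa [hftop.ne'] using fun h => ((hT'f top h).trans hftop).false
    have hbtop := (hS htop).2
    refine ⟨insert top (insert f T'), (insert_erase htop).superset.trans
      (insert_subset_insert _ (hST'.trans (subset_insert _ _))), ?_, ?_, fun x hx hxS => ?_⟩
    · have ha : a ≤ b' := (hS (mem_of_mem_erase ((S.erase top).max'_mem hne'))).1
      rw [coe_insert, coe_insert]
      refine Set.insert_subset (hS htop) (Set.insert_subset
        ⟨ha.trans hb'f.le, hftop.le.trans hbtop⟩ fun x hx => ⟨(hT'ab hx).1, ?_⟩)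
      exact (hT'ab hx).2.trans ((hb'f.trans hftop).le.trans hbtop)
    · rw [card_insert_of_notMem htopT, card_insert_of_notMem hfT']
      omega
    · rcases mem_insert.1 hx with rfl | hx
      · exact absurd htop hxS
      rcases mem_insert.1 hx with rfl | hx
      · rw [card_filter_lt_insert htopT hftop, filter_insert, if_neg (lt_irrefl _),
          filter_false_of_mem fun t ht => (hT'f t ht).not_gt]
        simp
      · rw [card_filter_lt_insert htopT ((hT'f x hx).trans hftop), card_filter_lt_insert hfT'
          (hT'f x hx), add_assoc]
        exact (hT'odd x hx fun h => hxS (mem_of_mem_erase h)).add_even even_two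

theorem Finset.exists_superset_even_above (φ : ℕ) {a b : α} (S : Finset α)
    (hS : ↑S ⊆ Set.Icc a b) (hcard : φ + 1 < #S) :
    ∃ T : Finset α, S ⊆ T ∧ ↑T ⊆ Set.Icc a b ∧ #T = #S + φ ∧
      ∀ x ∈ T, x ∉ S → Even #{t ∈ T | x < t} := by
  have hne : S.Nonempty := card_pos.1 (by omega)
  set top := S.max' hne
  have htop : top ∈ S := S.max'_mem hne
  have hcard' : #(S.erase top) = #S - 1 := card_erase_of_mem htop
  have hne' : (S.erase top).Nonempty := card_pos.1 (by omega)
  obtain ⟨T', hST', hT'ab, hT'card, hT'odd⟩ := (S.erase top).exists_superset_odd_above φ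
    (b := (S.erase top).max' hne') (fun x hx => ⟨(hS (mem_of_mem_erase hx)).1, le_max' _ x hx⟩)
    (by omega)
  have hT'top : ∀ x ∈ T', x < top := fun x hx =>
    (hT'ab hx).2.trans_lt (S.lt_max'_of_mem_erase_max' hne ((S.erase top).max'_mem hne'))
  have htopT' : top ∉ T' := fun h => (hT'top top h).false
  refine ⟨insert top T', (insert_erase htop).superset.trans (insert_subset_insert _ hST'), ?_, ?_,
    fun x hx hxS => ?_⟩
  · rw [coe_insert]
    exact Set.insert_subset (hS htop) fun x hx =>
      ⟨(hT'ab hx).1, (hT'top x hx).le.trans (hS htop).2⟩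
  · rw [card_insert_of_notMem htopT']
    omega
  · rcases mem_insert.1 hx with rfl | hx
    · exact absurd htop hxS
    · rw [card_filter_lt_insert htopT' (hT'top x hx)]
      exact (hT'odd x hx fun h => hxS (mem_of_mem_erase h)).add_one

theorem Finset.exists_nodes_of_half_lt_card {k : ℕ} {a b : α} (S : Finset α)
    (hS : ↑S ⊆ Set.Icc a b) (hcard : (k + 2) / 2 < #S) :
    ∃ T : Finset α, #T = k + 1 ∧ ↑T ⊆ Set.Icc a b ∧
      (∀ x ∈ T, x ∉ S → Even #{t ∈ T | x < t}) ∧ #(S ∪ T) ≤ max #S (k + 1) := by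
  rcases le_or_gt (k + 1) #S with hbig | hsmall
  · obtain ⟨T, hTS, hT⟩ := exists_subset_card_eq hbig
    refine ⟨T, hT, (coe_subset.2 hTS).trans hS, fun x hx hxS => absurd (hTS hx) hxS, ?_⟩
    rw [union_eq_left.2 hTS]
    exact le_max_left _ _
  · obtain ⟨T, hST, hTab, hT, heven⟩ := S.exists_superset_even_above (k + 1 - #S) hS (by omega)
    refine ⟨T, by omega, hTab, heven, ?_⟩
    rw [union_eq_right.2 hST]
    omega

end Nodes

theorem IsChebyshevSystem.exists_improvement_of_half_lt_card {k : ℕ} {A B : ℝ}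
    {Ψ : Fin k → ℝ → ℝ} (hΨ : IsChebyshevSystem A B Ψ) (hk : 0 < k) (W : ℝ →₀ ℝ)
    (hW : ∀ x, 0 ≤ W x) (hWAB : ↑W.support ⊆ Icc A B) (hcard : (k + 2) / 2 < #W.support) :
    ∃ W' : ℝ →₀ ℝ, (∀ x, 0 ≤ W' x) ∧ ↑W'.support ⊆ Icc A B ∧
      #W'.support < max #W.support (k + 1) ∧
      (∀ i, linearCombination ℝ (Ψ i) W' = linearCombination ℝ (Ψ i) W) ∧
      ∀ g, IsChebyshevSystem A B (Fin.snoc Ψ g) →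
        linearCombination ℝ g W < linearCombination ℝ g W' := by
  obtain ⟨T, hT, hTAB, heven, hunion⟩ := W.support.exists_nodes_of_half_lt_card hWAB hcard
  set D := cofactorDesign Ψ T hT
  have hDT : D.support ⊆ T := support_cofactorDesign_subset Ψ T hT
  obtain ⟨t, ht, hW'0, hW'card⟩ := W.exists_add_smul_nonneg_card_support_lt D hW
    (hΨ.exists_cofactorDesign_neg hTAB hk) fun x hx => by
      obtain ⟨hxT, hodd⟩ := hΨ.odd_card_of_cofactorDesign_neg hTAB hx
      by_contra hWx
      exact Nat.not_even_iff_odd.2 hodd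
        (heven x hxT (Finsupp.notMem_support_iff.2 (le_antisymm (not_lt.1 hWx) (hW x))))
  have hsupp : (W + t • D).support ⊆ W.support ∪ T :=
    Finsupp.support_add.trans (Finset.union_subset_union le_rfl (Finsupp.support_smul.trans hDT))
  refine ⟨W + t • D, hW'0, ?_, ?_, fun i => ?_, fun g hg => ?_⟩
  · refine (Finset.coe_subset.2 hsupp).trans ?_
    rw [Finset.coe_union]
    exact Set.union_subset hWAB hTAB
  · exact hW'card.trans_le
      ((Finset.card_le_card (Finset.union_subset_union le_rfl hDT)).trans hunion)
  · rw [map_add, map_smul, linearCombination_cofactorDesign, det_snoc_eq_sum_lastRowCofactor,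
      sum_lastRowCofactor_mul_eq_zero, smul_zero, add_zero]
  · have hpos : 0 < linearCombination ℝ g D := by
      rw [linearCombination_cofactorDesign]
      exact hg _ (T.orderEmbOfFin hT).strictMono fun j => hTAB (T.orderEmbOfFin_mem hT j)
    rw [map_add, map_smul, smul_eq_mul]
    exact lt_add_of_pos_right _ (mul_pos ht hpos)

section TupleDesign

variable {N : ℕ}

noncomputable def tupleDesign (p : (Fin N → ℝ) × (Fin N → ℝ)) : ℝ →₀ ℝ :=
  ∑ l, single (p.2 l) (p.1 l)

theorem linearCombination_tupleDesign (g : ℝ → ℝ) (p : (Fin N → ℝ) × (Fin N → ℝ)) :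
    linearCombination ℝ g (tupleDesign p) = ∑ l, p.1 l * g (p.2 l) := by
  simp [tupleDesign]

theorem support_tupleDesign_subset (p : (Fin N → ℝ) × (Fin N → ℝ)) :
    (tupleDesign p).support ⊆ Finset.univ.image p.2 :=
  support_finsetSum.trans (Finset.biUnion_subset.2 fun l _ =>
    support_single_subset.trans (by simp))

theorem tupleDesign_nonneg {p : (Fin N → ℝ) × (Fin N → ℝ)} (hp : ∀ l, 0 ≤ p.1 l) (x : ℝ) :
    0 ≤ tupleDesign p x := by
  simp only [tupleDesign, finsetSum_apply, Finsupp.single_apply]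
  exact Finset.sum_nonneg fun l _ => by split_ifs <;> simp [hp l]

theorem exists_tupleDesign_eq {A B : ℝ} (hAB : A < B) (W : ℝ →₀ ℝ)
    (hWAB : ↑W.support ⊆ Icc A B) (hcard : #W.support ≤ N) :
    ∃ p : (Fin N → ℝ) × (Fin N → ℝ),
      (∀ l, p.1 l = W (p.2 l)) ∧ (∀ l, p.2 l ∈ Icc A B) ∧ tupleDesign p = W := by
  -- pad the support with zero-weight points of `[A,B]` up to exactly `N` points
  obtain ⟨R, hRAB, hR⟩ :=
    ((Set.Icc_infinite hAB).sdiff W.support.finite_toSet).exists_subset_card_eq (N - #W.support)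
  have hdisj : Disjoint W.support R := Finset.disjoint_right.2 fun x hx => (hRAB hx).2
  have hT : #(W.support ∪ R) = N := by rw [Finset.card_union_of_disjoint hdisj]; omega
  set y := (W.support ∪ R).orderEmbOfFin hT
  have hyT : ∀ l, y l ∈ W.support ∪ R := (W.support ∪ R).orderEmbOfFin_mem hT
  refine ⟨(fun l => W (y l), y), fun l => rfl, fun l => ?_, ?_⟩
  · rcases Finset.mem_union.1 (hyT l) with h | h
    exacts [hWAB h, (hRAB h).1]
  · calc tupleDesign (fun l => W (y l), y) = ∑ x ∈ W.support ∪ R, single x (W x) := by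
          rw [← (W.support ∪ R).map_orderEmbOfFin_univ hT, Finset.sum_map]
          rfl
      _ = W :=
          (sum_of_support_subset W Finset.subset_union_left _ (by simp)).symm.trans W.sum_single

theorem continuousOn_linearCombination_tupleDesign {A B : ℝ} {g : ℝ → ℝ}
    (hg : ContinuousOn g (Icc A B)) :
    ContinuousOn (fun p : (Fin N → ℝ) × (Fin N → ℝ) => linearCombination ℝ g (tupleDesign p))
      {p | ∀ l, p.2 l ∈ Icc A B} := by
  simp only [linearCombination_tupleDesign]
  refine continuousOn_finsetSum _ fun l _ => ContinuousOn.mul (by fun_prop) ?_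
  exact hg.comp (by fun_prop) fun p hp => hp l

theorem isCompact_setOf_tupleDesign {ι : Type*} {A B M : ℝ} {g : ι → ℝ → ℝ}
    (hg : ∀ i, ContinuousOn (g i) (Icc A B)) {s : ι → Set ℝ} (hs : ∀ i, IsClosed (s i)) :
    IsCompact {p : (Fin N → ℝ) × (Fin N → ℝ) | (∀ l, p.1 l ∈ Icc 0 M) ∧
      (∀ l, p.2 l ∈ Icc A B) ∧ ∀ i, linearCombination ℝ (g i) (tupleDesign p) ∈ s i} := by
  set K := (Set.univ.pi fun _ : Fin N => Icc 0 M) ×ˢ (Set.univ.pi fun _ : Fin N => Icc A B)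
  have hK : IsCompact K := (isCompact_univ_pi fun _ => isCompact_Icc).prod
    (isCompact_univ_pi fun _ => isCompact_Icc)
  have hKAB : K ⊆ {p | ∀ l, p.2 l ∈ Icc A B} := fun p hp l => hp.2 l (Set.mem_univ l)
  have heq : {p : (Fin N → ℝ) × (Fin N → ℝ) | (∀ l, p.1 l ∈ Icc 0 M) ∧
      (∀ l, p.2 l ∈ Icc A B) ∧ ∀ i, linearCombination ℝ (g i) (tupleDesign p) ∈ s i} =
      K ∩ ⋂ i, K ∩ (fun p => linearCombination ℝ (g i) (tupleDesign p)) ⁻¹' s i := by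
    ext p
    simp only [K, Set.mem_ofPred_eq, Set.mem_inter_iff, Set.mem_iInter, Set.mem_preimage,
      Set.mem_prod, Set.mem_univ_pi]
    constructor
    · rintro ⟨h₁, h₂, h₃⟩
      exact ⟨⟨h₁, h₂⟩, fun i => ⟨⟨h₁, h₂⟩, h₃ i⟩⟩
    · rintro ⟨⟨h₁, h₂⟩, h₃⟩
      exact ⟨h₁, h₂, fun i => (h₃ i).2⟩
  rw [heq]
  exact hK.inter_right (isClosed_iInter fun i =>
    ((continuousOn_linearCombination_tupleDesign (hg i)).mono hKAB).preimage_isClosed_of_isClosed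
      hK.isClosed (hs i))

end TupleDesign

theorem Finsupp.apply_le_linearCombination_one {α : Type*} {W : α →₀ ℝ} (hW : ∀ x, 0 ≤ W x)
    (x : α) : W x ≤ linearCombination ℝ (fun _ => (1 : ℝ)) W := by
  rw [linearCombination_apply, Finsupp.sum]
  simp only [smul_eq_mul, mul_one]
  by_cases hx : x ∈ W.support
  · exact Finset.single_le_sum (fun y _ => hW y) hx
  · rw [Finsupp.notMem_support_iff.1 hx]
    exact Finset.sum_nonneg fun y _ => hW y

theorem exists_isMax_linearCombination_of_card_support_le {A B : ℝ} (hAB : A < B) (N : ℕ)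
    {ι : Type*} {g : ι → ℝ → ℝ} (hg : ∀ i, ContinuousOn (g i) (Icc A B)) {s : ι → Set ℝ}
    (hs : ∀ i, IsClosed (s i)) {h : ℝ → ℝ} (hh : ContinuousOn h (Icc A B)) {M : ℝ}
    (hM : ∀ W : ℝ →₀ ℝ, (∀ x, 0 ≤ W x) → (∀ i, linearCombination ℝ (g i) W ∈ s i) →
      ∀ x, W x ≤ M)
    (W₀ : ℝ →₀ ℝ) (hW₀ : ∀ x, 0 ≤ W₀ x) (hW₀AB : ↑W₀.support ⊆ Icc A B)
    (hW₀s : ∀ i, linearCombination ℝ (g i) W₀ ∈ s i) (hW₀N : #W₀.support ≤ N) :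
    ∃ W : ℝ →₀ ℝ, ((∀ x, 0 ≤ W x) ∧ ↑W.support ⊆ Icc A B ∧
      (∀ i, linearCombination ℝ (g i) W ∈ s i) ∧ #W.support ≤ N) ∧
      ∀ W' : ℝ →₀ ℝ, (∀ x, 0 ≤ W' x) → ↑W'.support ⊆ Icc A B →
        (∀ i, linearCombination ℝ (g i) W' ∈ s i) → #W'.support ≤ N →
          linearCombination ℝ h W' ≤ linearCombination ℝ h W := by
  set X := {p : (Fin N → ℝ) × (Fin N → ℝ) | (∀ l, p.1 l ∈ Icc 0 M) ∧
    (∀ l, p.2 l ∈ Icc A B) ∧ ∀ i, linearCombination ℝ (g i) (tupleDesign p) ∈ s i}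
  have hmemX : ∀ W : ℝ →₀ ℝ, (∀ x, 0 ≤ W x) → ↑W.support ⊆ Icc A B →
      (∀ i, linearCombination ℝ (g i) W ∈ s i) → #W.support ≤ N →
      ∃ p ∈ X, tupleDesign p = W := by
    intro W hW hWAB hWs hWN
    obtain ⟨p, hp₁, hp₂, rfl⟩ := exists_tupleDesign_eq hAB W hWAB hWN
    exact ⟨p, ⟨fun l => hp₁ l ▸ ⟨hW _, hM _ hW hWs _⟩, hp₂, hWs⟩, rfl⟩
  obtain ⟨p₀, hp₀X, -⟩ := hmemX W₀ hW₀ hW₀AB hW₀s hW₀N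
  obtain ⟨p, ⟨hpM, hpAB, hps⟩, hpmax⟩ := (isCompact_setOf_tupleDesign hg hs).exists_isMaxOn
    ⟨p₀, hp₀X⟩ ((continuousOn_linearCombination_tupleDesign hh).mono fun p hp => hp.2.1)
  refine ⟨tupleDesign p, ⟨tupleDesign_nonneg fun l => (hpM l).1, fun x hx => ?_, hps, ?_⟩,
    fun W' hW' hW'AB hW's hW'N => ?_⟩
  · obtain ⟨l, -, rfl⟩ := Finset.mem_image.1 (support_tupleDesign_subset p hx)
    exact hpAB l
  · exact (Finset.card_le_card (support_tupleDesign_subset p)).trans (card_image_le.trans (by simp))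
  · obtain ⟨p', hp'X, rfl⟩ := hmemX W' hW' hW'AB hW's hW'N
    exact hpmax hp'X

theorem exists_dominating_design_card_support_le {k : ℕ} (hk : 0 < k) {A B : ℝ} (hAB : A < B)
    {Ψ : Fin k → ℝ → ℝ} (hΨ0 : ∀ x, Ψ ⟨0, hk⟩ x = 1) (hcontΨ : ∀ i, ContinuousOn (Ψ i) (Icc A B))
    (hΨ : IsChebyshevSystem A B Ψ) {κ : Type*} {G : κ → ℝ → ℝ}
    (hcontG : ∀ j, ContinuousOn (G j) (Icc A B))
    (hG : ∀ j, IsChebyshevSystem A B (Fin.snoc Ψ (G j))) {h : ℝ → ℝ}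
    (hconth : ContinuousOn h (Icc A B)) (hh : IsChebyshevSystem A B (Fin.snoc Ψ h))
    (W₀ : ℝ →₀ ℝ) (hW₀ : ∀ x, 0 ≤ W₀ x) (hW₀AB : ↑W₀.support ⊆ Icc A B) :
    ∃ W : ℝ →₀ ℝ, (∀ x, 0 ≤ W x) ∧ ↑W.support ⊆ Icc A B ∧ #W.support ≤ (k + 2) / 2 ∧
      (∀ i, linearCombination ℝ (Ψ i) W = linearCombination ℝ (Ψ i) W₀) ∧
      ∀ j, linearCombination ℝ (G j) W₀ ≤ linearCombination ℝ (G j) W := by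
  have hmass : ∀ W : ℝ →₀ ℝ, (∀ x, 0 ≤ W x) →
      (∀ i, linearCombination ℝ (Ψ i) W = linearCombination ℝ (Ψ i) W₀) →
      ∀ x, W x ≤ linearCombination ℝ (Ψ ⟨0, hk⟩) W₀ := fun W hW hmom x =>
    (apply_le_linearCombination_one hW x).trans_eq (funext hΨ0 ▸ hmom ⟨0, hk⟩)
  obtain ⟨W, ⟨hW, hWAB, hWs, hWN⟩, hWmax⟩ := exists_isMax_linearCombination_of_card_support_le hAB
    (max #W₀.support (k + 1)) (g := Sum.elim Ψ G) (Sum.forall.2 ⟨hcontΨ, hcontG⟩)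
    (s := Sum.elim (fun i => {linearCombination ℝ (Ψ i) W₀})
      (fun j => Set.Ici (linearCombination ℝ (G j) W₀)))
    (Sum.forall.2 ⟨fun _ => isClosed_singleton, fun _ => isClosed_Ici⟩) hconth
    (fun W hW hWs => hmass W hW (Sum.forall.1 hWs).1) W₀ hW₀ hW₀AB
    (Sum.forall.2 ⟨fun _ => rfl, fun _ => Set.self_mem_Ici⟩) (le_max_left _ _)
  obtain ⟨hmom, hdom⟩ := Sum.forall.1 hWs
  refine ⟨W, hW, hWAB, ?_, hmom, hdom⟩
  -- otherwise the exchange step would produce an admissible design with a larger `h`-moment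
  by_contra! hcard
  obtain ⟨W', hW', hW'AB, hW'card, hmom', hdom'⟩ :=
    hΨ.exists_improvement_of_half_lt_card hk W hW hWAB hcard
  refine (hdom' h hh).not_ge (hWmax W' hW' hW'AB (Sum.forall.2 ⟨fun i => ?_, fun j => ?_⟩)
    (hW'card.le.trans (max_le hWN (le_max_right _ _))))
  · exact (hmom' i).trans (hmom i)
  · exact (hdom j).trans (hdom' _ (hG j)).le

theorem integral_finset_sum_smul_dirac {α E : Type*} [MeasurableSpace α]
    [MeasurableSingletonClass α] [NormedAddCommGroup E] [NormedSpace ℝ E] [CompleteSpace E]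
    (s : Finset α) {c : α → ENNReal} (hc : ∀ x ∈ s, c x ≠ ⊤) (g : α → E) :
    ∫ x, g x ∂(∑ x ∈ s, c x • Measure.dirac x) = ∑ x ∈ s, (c x).toReal • g x := by
  rw [integral_finsetSum_measure fun x hx => (integrable_dirac (by simp)).smul_measure (hc x hx)]
  simp [integral_smul_measure, integral_dirac]

theorem finset_sum_smul_dirac_apply_singleton {α : Type*} [MeasurableSpace α]
    [MeasurableSingletonClass α] {s : Finset α} (c : α → ENNReal) {x : α} (hx : x ∈ s) :
    (∑ y ∈ s, c y • Measure.dirac y) {x} = c x := by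
  rw [Measure.finsetSum_apply, Finset.sum_eq_single x (fun y _ hyx => by simp [hyx])
    (fun h => absurd hx h)]
  simp

theorem IsDesignOn.exists_finsupp {A B : ℝ} {ξ : Measure ℝ} {s : Finset ℝ}
    (hξ : IsDesignOn A B ξ s) :
    ∃ W : ℝ →₀ ℝ, (∀ x, 0 ≤ W x) ∧ ↑W.support ⊆ Icc A B ∧
      ∀ g : ℝ → ℝ, ∫ x, g x ∂ξ = linearCombination ℝ g W := by
  obtain ⟨hprob, hsAB, -, hξs⟩ := hξ
  refine ⟨∑ x ∈ s, single x (ξ {x}).toReal, fun x => ?_, fun x hx => hsAB ?_, fun g => ?_⟩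
  · simp only [finsetSum_apply, Finsupp.single_apply]
    exact Finset.sum_nonneg fun y _ => by split_ifs <;> simp
  · obtain ⟨y, hy, hxy⟩ := Finset.mem_biUnion.1 (support_finsetSum hx)
    rwa [Finset.mem_singleton.1 (support_single_subset hxy)]
  · rw [hξs, integral_finset_sum_smul_dirac s (fun x _ => measure_ne_top _ _)]
    simp [← hξs]

noncomputable def Finsupp.toMeasure (W : ℝ →₀ ℝ) : Measure ℝ :=
  ∑ x ∈ W.support, ENNReal.ofReal (W x) • Measure.dirac x

theorem Finsupp.integral_toMeasure {W : ℝ →₀ ℝ} (hW : ∀ x, 0 ≤ W x) (g : ℝ → ℝ) :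
    ∫ x, g x ∂W.toMeasure = linearCombination ℝ g W := by
  rw [toMeasure, integral_finset_sum_smul_dirac _ (fun _ _ => ENNReal.ofReal_ne_top),
    linearCombination_apply, Finsupp.sum]
  simp [ENNReal.toReal_ofReal (hW _)]

theorem Finsupp.isDesignOn_toMeasure {A B : ℝ} {W : ℝ →₀ ℝ} (hW : ∀ x, 0 ≤ W x)
    (hWAB : ↑W.support ⊆ Icc A B) (hmass : linearCombination ℝ (fun _ => (1 : ℝ)) W = 1) :
    IsDesignOn A B W.toMeasure W.support := by
  have hsingleton : ∀ x ∈ W.support, W.toMeasure {x} = ENNReal.ofReal (W x) :=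
    fun x hx => finset_sum_smul_dirac_apply_singleton _ hx
  refine ⟨⟨?_⟩, hWAB, fun x hx => ?_, Finset.sum_congr rfl fun x hx => by rw [hsingleton x hx]⟩
  · rw [← ENNReal.ofReal_one, ← hmass, linearCombination_apply, Finsupp.sum,
      ENNReal.ofReal_sum_of_nonneg fun x _ => by simpa using hW x]
    simp [toMeasure, Measure.finsetSum_apply]
  · rw [hsingleton x hx]
    exact ENNReal.ofReal_pos.2 ((hW x).lt_of_ne' (Finsupp.mem_support_iff.1 hx))

theorem matrixIntegral_eq_linearCombination {p₁ : ℕ} (C : ℝ → Matrix (Fin p₁) (Fin p₁) ℝ)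
    {ξ : Measure ℝ} {W : ℝ →₀ ℝ} (hξ : ∀ g : ℝ → ℝ, ∫ x, g x ∂ξ = linearCombination ℝ g W) :
    matrixIntegral C ξ = linearCombination ℝ C W := by
  ext a b
  simp [matrixIntegral, hξ, linearCombination_apply, Finsupp.sum, Matrix.sum_apply]

theorem dotProduct_mulVec_linearCombination {α n : Type*} [Fintype n]
    (C : α → Matrix n n ℝ) (W : α →₀ ℝ) (Q : n → ℝ) :
    Q ⬝ᵥ (linearCombination ℝ C W *ᵥ Q) = linearCombination ℝ (fun x => Q ⬝ᵥ (C x *ᵥ Q)) W := by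
  simp [linearCombination_apply, Finsupp.sum, Matrix.sum_mulVec, dotProduct_sum, smul_mulVec,
    dotProduct_smul]

theorem isSymm_linearCombination {α n : Type*} (C : α → Matrix n n ℝ) (W : α →₀ ℝ)
    (hC : ∀ x ∈ W.support, (C x).IsSymm) : (linearCombination ℝ C W).IsSymm := by
  rw [linearCombination_apply, Finsupp.sum, Matrix.IsSymm, transpose_sum]
  exact Finset.sum_congr rfl fun x hx => by rw [transpose_smul, (hC x hx).eq]

theorem posSemidef_linearCombination_sub {α n : Type*} [Fintype n] {C : α → Matrix n n ℝ}
    {W W₀ : α →₀ ℝ} (hW : ∀ x ∈ W.support, (C x).IsSymm) (hW₀ : ∀ x ∈ W₀.support, (C x).IsSymm)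
    (hdom : ∀ Q ≠ 0, linearCombination ℝ (fun x => Q ⬝ᵥ (C x *ᵥ Q)) W₀ ≤
      linearCombination ℝ (fun x => Q ⬝ᵥ (C x *ᵥ Q)) W) :
    (linearCombination ℝ C W - linearCombination ℝ C W₀).PosSemidef := by
  refine posSemidef_iff_dotProduct_mulVec.2 ⟨?_, fun Q => ?_⟩
  · rw [IsHermitian, conjTranspose_eq_transpose_of_trivial]
    exact ((isSymm_linearCombination C W hW).sub (isSymm_linearCombination C W₀ hW₀)).eq
  · rw [star_trivial, sub_mulVec, dotProduct_sub, dotProduct_mulVec_linearCombination,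
      dotProduct_mulVec_linearCombination, sub_nonneg]
    rcases eq_or_ne Q 0 with rfl | hQ
    · simp [linearCombination_apply]
    · exact hdom Q hQ

theorem IsChebyshevSystem.snoc_sum {k : ℕ} {A B : ℝ} {Ψ : Fin k → ℝ → ℝ} {ι : Type*}
    {s : Finset ι} (hs : s.Nonempty) {g : ι → ℝ → ℝ}
    (hg : ∀ a ∈ s, IsChebyshevSystem A B (Fin.snoc Ψ (g a))) :
    IsChebyshevSystem A B (Fin.snoc Ψ fun x => ∑ a ∈ s, g a x) := by
  intro y hy hyAB
  have hdet := fun a ha => hg a ha y hy hyAB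
  simp only [det_snoc_eq_sum_lastRowCofactor, Finset.mul_sum] at hdet ⊢
  rw [Finset.sum_comm]
  exact Finset.sum_pos hdet hs

theorem ContinuousOn.dotProduct_mulVec {α n : Type*} [TopologicalSpace α] [Fintype n]
    {C : α → Matrix n n ℝ} {S : Set α} (hC : ∀ a b, ContinuousOn (fun x => C x a b) S)
    (Q : n → ℝ) : ContinuousOn (fun x => Q ⬝ᵥ (C x *ᵥ Q)) S := by
  simp only [dotProduct, mulVec]
  exact continuousOn_finsetSum _ fun a _ => continuousOn_const.mul
    (continuousOn_finsetSum _ fun b _ => (hC a b).mul continuousOn_const)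

/-- Yang–Stufken complete class theorem, part (1): if `{Ψ₀,…,Ψ_{k-1}}` (with `Ψ₀ ≡ 1`)
and all extensions by `x ↦ QᵀC₂₂(x)Q` are Chebyshev systems, then every design `ξ` is
dominated by a design `ξ⁺` with at most `⌊(k+2)/2⌋` support points having the same
`Ψ`-moments and `∫ C₂₂ dξ⁺ - ∫ C₂₂ dξ` positive semidefinite. -/
theorem complete_class_upper
    {k p₁ : ℕ} (hk : 0 < k) (hp : 1 ≤ p₁) (A B : ℝ) (hAB : A < B)
    (Ψ : Fin k → ℝ → ℝ) (C : ℝ → Matrix (Fin p₁) (Fin p₁) ℝ)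
    (hΨ0 : ∀ x : ℝ, Ψ ⟨0, hk⟩ x = 1)
    (hcontΨ : ∀ i, ContinuousOn (Ψ i) (Set.Icc A B))
    (hcontC : ∀ a b, ContinuousOn (fun x => C x a b) (Set.Icc A B))
    (hsymm : ∀ x ∈ Set.Icc A B, (C x).IsSymm)
    (hCheb : IsChebyshevSystem A B Ψ)
    (hChebQ : ∀ Q : Fin p₁ → ℝ, Q ≠ 0 →
      IsChebyshevSystem A B (Fin.snoc Ψ fun x => Q ⬝ᵥ ((C x) *ᵥ Q)))
    (ξ : Measure ℝ) (s : Finset ℝ) (hξ : IsDesignOn A B ξ s) :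
    ∃ (ξp : Measure ℝ) (sp : Finset ℝ), IsDesignOn A B ξp sp ∧
      sp.card ≤ (k + 2) / 2 ∧
      (∀ i, ∫ x, Ψ i x ∂ξp = ∫ x, Ψ i x ∂ξ) ∧
      (matrixIntegral C ξp - matrixIntegral C ξ).PosSemidef := by
  obtain ⟨W₀, hW₀, hW₀AB, hξW₀⟩ := hξ.exists_finsupp
  have htrace : IsChebyshevSystem A B (Fin.snoc Ψ fun x => ∑ a, C x a a) := by
    refine IsChebyshevSystem.snoc_sum (Finset.univ_nonempty_iff.2 ⟨⟨0, hp⟩⟩) fun a _ => ?_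
    simpa [mulVec_single, single_dotProduct] using hChebQ (Pi.single a 1) (by simp)
  obtain ⟨W, hW, hWAB, hcard, hmom, hdom⟩ := exists_dominating_design_card_support_le hk hAB hΨ0
    hcontΨ hCheb (G := fun Q : {Q : Fin p₁ → ℝ // Q ≠ 0} => fun x => Q.1 ⬝ᵥ (C x *ᵥ Q.1))
    (fun Q => ContinuousOn.dotProduct_mulVec hcontC Q.1) (fun Q => hChebQ Q.1 Q.2)
    (continuousOn_finsetSum _ fun a _ => hcontC a a) htrace W₀ hW₀ hW₀AB
  have hmass : linearCombination ℝ (fun _ => (1 : ℝ)) W = 1 := by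
    have : IsProbabilityMeasure ξ := hξ.1
    rw [← funext hΨ0, hmom, ← hξW₀]
    simp [hΨ0]
  refine ⟨W.toMeasure, W.support, W.isDesignOn_toMeasure hW hWAB hmass, hcard,
    fun i => by rw [W.integral_toMeasure hW, hmom, hξW₀], ?_⟩
  rw [matrixIntegral_eq_linearCombination C (Finsupp.integral_toMeasure hW),
    matrixIntegral_eq_linearCombination C hξW₀]
  exact posSemidef_linearCombination_sub (fun x hx => hsymm x (hWAB hx))
    (fun x hx => hsymm x (hW₀AB hx)) fun Q hQ => hdom ⟨Q, hQ⟩
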